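/- For every tree T on n vertices, S_n ⪯ T ⪯ P_n, where S_n is the star on n vertices and P_n is the path on n vertices. -/

import Mathlib

namespace TreeOrder

attribute [local instance] Classical.propDecidable

variable {V : Type*} {W : Type*}

/-- `side G u v` = number of vertices strictly closer to `u` than to `v`;
for an edge `uv` of a tree this is the order of the component of `T - uv` containing `u`. -/
noncomputable def side [Fintype V] (G : SimpleGraph V) (u v : V) : ℕ :=
  (Finset.univ.filter fun w => G.dist w u < G.dist w v).card

/-- `mu G u v = min (n_u(e), n_v(e))` for the edge `e = uv`. -/
noncomputable def mu [Fintype V] (G : SimpleGraph V) (u v : V) : ℕ :=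
  min (side G u v) (side G v u)

/-- `mu` as a function on unordered pairs. -/
noncomputable def muE [Fintype V] (G : SimpleGraph V) : Sym2 V → ℕ :=
  Sym2.lift ⟨fun u v => mu G u v, fun _ _ => min_comm _ _⟩

/-- `r G i` = number of edges `e` of `G` with `μ(e) = i`. -/
noncomputable def r [Fintype V] (G : SimpleGraph V) (i : ℕ) : ℕ :=
  (Finset.univ.filter fun e : Sym2 V => e ∈ G.edgeSet ∧ muE G e = i).card

/-- `tailSum G n k = Σ_{i=k}^{⌊n/2⌋} r_i(G)`. -/
noncomputable def tailSum [Fintype V] (G : SimpleGraph V) (n k : ℕ) : ℕ :=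
  ∑ i ∈ Finset.Icc k (n / 2), r G i

/-- The order `⪯` on trees with `n` vertices, via edge division vectors. -/
def Preceq [Fintype V] [Fintype W] (n : ℕ) (G : SimpleGraph V) (H : SimpleGraph W) : Prop :=
  ∀ k, 1 ≤ k → k ≤ n / 2 → tailSum G n k ≤ tailSum H n k

/-- The strict order `≺`. -/
def Prec [Fintype V] [Fintype W] (n : ℕ) (G : SimpleGraph V) (H : SimpleGraph W) : Prop :=
  Preceq n G H ∧ ∃ k, 1 ≤ k ∧ k ≤ n / 2 ∧ tailSum G n k < tailSum H n k

/-- Equality of edge division vectors `r(G) = r(H)`. -/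
def SameEdgeDivision [Fintype V] [Fintype W] (n : ℕ) (G : SimpleGraph V)
    (H : SimpleGraph W) : Prop :=
  ∀ i, 1 ≤ i → i ≤ n / 2 → r G i = r H i

/-- `u` is a centroidal vertex: `n_u(e) ≥ n/2` for every edge `e` incident to `u`. -/
def IsCentroidal [Fintype V] (G : SimpleGraph V) (u : V) : Prop :=
  ∀ v, G.Adj u v → Fintype.card V ≤ 2 * side G u v

/-- `u` is a proper centroidal vertex: `n_u(e) > ⌈n/2⌉` for every edge `e` incident to `u`. -/
def IsProperCentroidal [Fintype V] (G : SimpleGraph V) (u : V) : Prop :=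
  ∀ v, G.Adj u v → (Fintype.card V + 1) / 2 < side G u v

/-- The edge `uv` is a center edge: `μ(uv) = ⌊n/2⌋`. -/
def IsCenterEdge [Fintype V] (G : SimpleGraph V) (u v : V) : Prop :=
  G.Adj u v ∧ mu G u v = Fintype.card V / 2

/-- degree of a vertex -/
noncomputable def deg [Fintype V] (G : SimpleGraph V) (v : V) : ℕ :=
  (Finset.univ.filter fun w => G.Adj v w).card

/-- The path `P_n` on `n` vertices. -/
def pathG (n : ℕ) : SimpleGraph (Fin n) :=
  SimpleGraph.fromRel fun x y => (x : ℕ) + 1 = y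

/-- The star `S_n` on `n` vertices. -/
def starG (n : ℕ) : SimpleGraph (Fin n) :=
  SimpleGraph.fromRel fun x _ => (x : ℕ) = 0

/-- The double star path `CP_{n;a,b}` : a path on `n - a - b` vertices (at positions
`a, …, n - b - 1`) with `a` pendent vertices attached to its first vertex and `b`
pendent vertices attached to its last vertex. -/
def doubleStar (n a b : ℕ) : SimpleGraph (Fin n) :=
  SimpleGraph.fromRel fun x y =>
    ((x : ℕ) < a ∧ (y : ℕ) = a) ∨
    (a ≤ (x : ℕ) ∧ (x : ℕ) + 1 = y ∧ (y : ℕ) < n - b) ∨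
    ((x : ℕ) = n - b - 1 ∧ n - b ≤ (y : ℕ))

/-- `CP_{n,k}^s` : a path `v_1 ⋯ v_k` (at positions `0, …, k-1`) with all
`n - k` pendent vertices attached to `v_s` (position `s - 1`). -/
def cpOne (n k s : ℕ) : SimpleGraph (Fin n) :=
  SimpleGraph.fromRel fun x y =>
    ((x : ℕ) + 1 = y ∧ (y : ℕ) < k) ∨ ((x : ℕ) = s - 1 ∧ k ≤ (y : ℕ))

/-- The caterpillar `CP(n; n_1, …, n_k)` : a path `v_1 ⋯ v_k` (at positions `0, …, k-1`),
where pendent vertex `j` (for `k ≤ j < n`) is attached to the path vertex at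
position `f j` (so `n_i = |{j : f j = i - 1}|`). -/
def caterpillar (n k : ℕ) (f : ℕ → ℕ) : SimpleGraph (Fin n) :=
  SimpleGraph.fromRel fun x y =>
    ((x : ℕ) + 1 = y ∧ (y : ℕ) < k) ∨ (k ≤ (y : ℕ) ∧ (x : ℕ) = f y)

/-- The balanced starlike tree `SP_{n,q}` : the center is vertex `0`, and vertex
`j ≥ 1` lies on branch `(j - 1) % q` at depth `(j - 1)/q + 1`; so the `q` branches are
paths whose orders pairwise differ by at most `1`. -/
def balancedStar (n q : ℕ) : SimpleGraph (Fin n) :=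
  SimpleGraph.fromRel fun x y =>
    ((x : ℕ) = 0 ∧ 1 ≤ (y : ℕ) ∧ (y : ℕ) ≤ q) ∨ (1 ≤ (x : ℕ) ∧ (x : ℕ) + q = y)

/-- The edge-moving transformation of `G` w.r.t. the edge `uv`: contract `uv` to `u`
(moving all edges at `v` to `u`) and attach `v` to `u` as a pendent vertex. -/
def edgeMove (G : SimpleGraph V) (u v : V) : SimpleGraph V :=
  SimpleGraph.fromRel fun x y =>
    (G.Adj x y ∧ x ≠ v ∧ y ≠ v) ∨ (x = u ∧ y = v) ∨ (x = u ∧ G.Adj v y ∧ y ≠ u)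

/-!
Root the tree `T` at a vertex `r`. An edge `uv` with `v` farther from `r` than `u` cuts off
`subtree r v`, the vertices `w` such that `v` lies on the geodesic from `r` to `w`. Since
geodesics in a tree are unique, these sets form a laminar family of subsets of `V ∖ {r}`, and
distinct edges cut off distinct sets. An edge with `μ ≥ k` cuts off between `k` and `n - k`
vertices, and a laminar family of such sets has at most `n + 1 - 2k` members when `k ≥ 2`;
this is exactly the number of such edges of `P_n`. For `k = 1` all `n - 1` edges of `T` count,
while every edge of `S_n` has `μ = 1`.
-/

open SimpleGraph Finset

section Laminar

variable {α : Type*}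

def IsLaminar (F : Finset (Finset α)) : Prop :=
  ∀ A ∈ F, ∀ B ∈ F, A ⊆ B ∨ B ⊆ A ∨ Disjoint A B

lemma IsLaminar.mono {F F' : Finset (Finset α)} (hF : IsLaminar F) (h : F' ⊆ F) :
    IsLaminar F' :=
  fun A hA B hB => hF A (h hA) B (h hB)

variable [DecidableEq α]

/-- The extremal families are a chain of sizes `k, …, min c #U` and two disjoint such chains. -/
theorem IsLaminar.card_le {k c : ℕ} (hk : 2 ≤ k) {F : Finset (Finset α)} {U : Finset α}
    (hF : IsLaminar F) (hmem : ∀ A ∈ F, A ⊆ U ∧ k ≤ #A ∧ #A ≤ c) :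
    #F ≤ max (#U + 2 - 2 * k) (min c #U + 1 - k) := by
  induction F using Finset.strongInduction generalizing U c with
  | H F ih =>
  rcases F.eq_empty_or_nonempty with rfl | hne
  · simp
  obtain ⟨A, hA, hAmax⟩ := F.exists_max_image card hne
  obtain ⟨hAU, hkA, hAc⟩ := hmem A hA
  have hAU' := card_le_card hAU
  by_cases hall : ∀ B ∈ F, B ⊆ A
  · have hF' := ih (F.erase A) (erase_ssubset hA) (hF.mono (erase_subset A F))
      (U := A) (c := #A - 1) fun B hB => by
        obtain ⟨hBA, hB⟩ := mem_erase.1 hB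
        have := card_lt_card (ssubset_of_subset_of_ne (hall B hB) hBA)
        exact ⟨hall B hB, (hmem B hB).2.1, by omega⟩
    have := card_erase_add_one hA
    omega
  · push Not at hall
    obtain ⟨B₀, hB₀, hB₀A⟩ := hall
    have hout : ∀ B ∈ F, ¬ B ⊆ A → B ⊆ U \ A := by
      intro B hB hBA
      rcases hF A hA B hB with h | h | h
      · exact (hBA (eq_of_subset_of_card_le h (hAmax B hB)).superset).elim
      · exact (hBA h).elim
      · exact subset_sdiff.2 ⟨(hmem B hB).1, h.symm⟩
    have hin := ih (F.filter (· ⊆ A)) (filter_ssubset.2 ⟨B₀, hB₀, hB₀A⟩)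
      (hF.mono (filter_subset _ _)) (U := A) (c := c) fun B hB => by
        obtain ⟨hB, hBA⟩ := mem_filter.1 hB
        exact ⟨hBA, (hmem B hB).2⟩
    have hrest := ih (F.filter (¬ · ⊆ A)) (filter_ssubset.2 ⟨A, hA, not_not.2 subset_rfl⟩)
      (hF.mono (filter_subset _ _)) (U := U \ A) (c := c) fun B hB => by
        obtain ⟨hB, hBA⟩ := mem_filter.1 hB
        exact ⟨hout B hB hBA, (hmem B hB).2⟩
    have := card_filter_add_card_filter_not (s := F) (· ⊆ A)
    have := card_sdiff_of_subset hAU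
    have := card_le_card (hout B₀ hB₀ hB₀A)
    have := (hmem B₀ hB₀).2.1
    omega

end Laminar

section Geodesics

variable {G : SimpleGraph V}

def _root_.SimpleGraph.OnGeodesic (G : SimpleGraph V) (a x b : V) : Prop :=
  G.dist a x + G.dist x b = G.dist a b

lemma _root_.SimpleGraph.OnGeodesic.trans (hG : G.Connected) {r a b w : V}
    (hab : OnGeodesic G r a b) (hbw : OnGeodesic G r b w) : OnGeodesic G r a w := by
  have : G.dist a w ≤ G.dist a b + G.dist b w := hG.dist_triangle
  have : G.dist r w ≤ G.dist r a + G.dist a w := hG.dist_triangle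
  unfold OnGeodesic at *
  omega

lemma _root_.SimpleGraph.IsTree.eq_of_isPath (hT : G.IsTree) {a b : V} {p q : G.Walk a b}
    (hp : p.IsPath) (hq : q.IsPath) : p = q :=
  Subtype.ext_iff.1 ((hT.isAcyclic.subsingleton_path a b).elim ⟨p, hp⟩ ⟨q, hq⟩)

lemma _root_.SimpleGraph.IsTree.mem_support_iff_onGeodesic (hT : G.IsTree) {a b x : V}
    {p : G.Walk a b} (hp : p.IsPath) : x ∈ p.support ↔ OnGeodesic G a x b := by
  classical
  constructor
  · intro hx
    obtain ⟨q, hq, hqlen⟩ := hT.connected.exists_path_of_dist a b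
    have hplen : p.length = G.dist a b := hT.eq_of_isPath hp hq ▸ hqlen
    have hsplit := congrArg Walk.length (p.take_spec hx)
    rw [Walk.length_append] at hsplit
    have := dist_le (p.takeUntil x hx)
    have := dist_le (p.dropUntil x hx)
    have : G.dist a b ≤ G.dist a x + G.dist x b := hT.connected.dist_triangle
    unfold OnGeodesic
    omega
  · intro hx
    obtain ⟨q₁, -, h₁⟩ := hT.connected.exists_path_of_dist a x
    obtain ⟨q₂, -, h₂⟩ := hT.connected.exists_path_of_dist x b
    have hq : (q₁.append q₂).IsPath :=
      Walk.isPath_of_length_eq_dist _ (by rw [Walk.length_append, h₁, h₂]; exact hx)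
    rw [hT.eq_of_isPath hp hq, Walk.mem_support_append_iff]
    exact Or.inl q₁.end_mem_support

/-- A vertex on the geodesic from `x` to `z` separates `x` from `z`: otherwise a walk
`x → y → z` avoiding `v` would shorten to a second path from `x` to `z`. -/
lemma _root_.SimpleGraph.IsTree.onGeodesic_or (hT : G.IsTree) {x v z : V}
    (h : OnGeodesic G x v z) (y : V) : OnGeodesic G x v y ∨ OnGeodesic G y v z := by
  classical
  by_contra! hne
  obtain ⟨p, hp, -⟩ := hT.connected.exists_path_of_dist x y
  obtain ⟨q, hq, -⟩ := hT.connected.exists_path_of_dist y z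
  have hv := (hT.mem_support_iff_onGeodesic (p.append q).bypass_isPath).2 h
  rcases (Walk.mem_support_append_iff p q).1 ((p.append q).support_bypass_subset_support hv)
    with hv | hv
  · exact hne.1 ((hT.mem_support_iff_onGeodesic hp).1 hv)
  · exact hne.2 ((hT.mem_support_iff_onGeodesic hq).1 hv)

lemma _root_.SimpleGraph.IsTree.onGeodesic_of_dist_le (hT : G.IsTree) {r a b w : V}
    (ha : OnGeodesic G r a w) (hb : OnGeodesic G r b w) (hab : G.dist r a ≤ G.dist r b) :
    OnGeodesic G r a b := by
  rcases hT.onGeodesic_or ha b with h | h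
  · exact h
  · have : G.dist a b = G.dist b a := dist_comm
    unfold OnGeodesic at *
    omega

lemma _root_.SimpleGraph.IsTree.dist_lt_dist_iff_onGeodesic (hT : G.IsTree) {r u v : V}
    (huv : G.Adj u v) (hr : G.dist r v = G.dist r u + 1) (w : V) :
    G.dist w v < G.dist w u ↔ OnGeodesic G r v w := by
  have hvu : G.dist v u = 1 := dist_eq_one_iff_adj.2 huv.symm
  constructor
  · intro hw
    have hwu : OnGeodesic G w v u := by
      have := hT.dist_eq_dist_add_one_of_adj w huv
      unfold OnGeodesic
      omega
    rcases hT.onGeodesic_or hwu r with h | h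
    · have : G.dist w r = G.dist r w := dist_comm
      have : G.dist w v = G.dist v w := dist_comm
      have : G.dist v r = G.dist r v := dist_comm
      unfold OnGeodesic at *
      omega
    · unfold OnGeodesic at h
      omega
  · intro hw
    have : G.dist r w ≤ G.dist r u + G.dist u w := hT.connected.dist_triangle
    have : G.dist u w = G.dist w u := dist_comm
    have : G.dist v w = G.dist w v := dist_comm
    unfold OnGeodesic at hw
    omega

lemma _root_.SimpleGraph.IsTree.eq_of_adj_of_dist_eq (hT : G.IsTree) {r u u' v : V}
    (hu : G.Adj u v) (hu' : G.Adj u' v) (h : G.dist r v = G.dist r u + 1)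
    (h' : G.dist r v = G.dist r u' + 1) : u = u' := by
  have hg : OnGeodesic G r u v := by rw [OnGeodesic, dist_eq_one_iff_adj.2 hu, h]
  have hg' : OnGeodesic G r u' v := by rw [OnGeodesic, dist_eq_one_iff_adj.2 hu', h']
  have := hT.onGeodesic_of_dist_le hg hg' (by omega)
  unfold OnGeodesic at this
  exact hT.connected.dist_eq_zero_iff.1 (by omega)

lemma _root_.SimpleGraph.IsTree.exists_eq_mk_of_mem_edgeSet (hT : G.IsTree) (r : V)
    {e : Sym2 V} (he : e ∈ G.edgeSet) :
    ∃ u v, G.Adj u v ∧ G.dist r v = G.dist r u + 1 ∧ e = s(u, v) := by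
  induction e using Sym2.ind with
  | _ x y =>
  rcases hT.dist_eq_dist_add_one_of_adj r he with h | h
  · exact ⟨y, x, he.symm, h, Sym2.eq_swap⟩
  · exact ⟨x, y, he, h, rfl⟩

variable [Fintype V]

/-- The vertices below `v` in the tree rooted at `r`. -/
noncomputable def _root_.SimpleGraph.subtree (G : SimpleGraph V) (r v : V) : Finset V :=
  {w | G.OnGeodesic r v w}

@[simp]
lemma _root_.SimpleGraph.mem_subtree {r v w : V} : w ∈ G.subtree r v ↔ G.OnGeodesic r v w := by
  simp [subtree]

lemma _root_.SimpleGraph.subtree_self (r : V) : G.subtree r r = univ := by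
  ext w
  simp [OnGeodesic]

lemma _root_.SimpleGraph.Connected.subtree_injective (hG : G.Connected) (r : V) :
    Function.Injective (G.subtree r) := by
  intro v v' h
  have hv : v ∈ G.subtree r v' := h ▸ by simp [OnGeodesic]
  have hv' : v' ∈ G.subtree r v := h ▸ by simp [OnGeodesic]
  simp only [mem_subtree, OnGeodesic] at hv hv'
  have : G.dist v v' = G.dist v' v := dist_comm
  exact hG.dist_eq_zero_iff.1 (by omega)

lemma _root_.SimpleGraph.Connected.eq_of_mem_subtree (hG : G.Connected) {r v : V}
    (h : r ∈ G.subtree r v) : v = r := by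
  simp only [mem_subtree, OnGeodesic, dist_self] at h
  exact (hG.dist_eq_zero_iff.1 (by omega)).symm

lemma _root_.SimpleGraph.IsTree.isLaminar_image_subtree [DecidableEq V] (hT : G.IsTree) (r : V)
    (s : Finset V) : IsLaminar (s.image (G.subtree r)) := by
  simp only [IsLaminar, mem_image]
  rintro _ ⟨a, -, rfl⟩ _ ⟨b, -, rfl⟩
  by_cases hdisj : Disjoint (G.subtree r a) (G.subtree r b)
  · exact Or.inr (Or.inr hdisj)
  obtain ⟨w, hwa, hwb⟩ := not_disjoint_iff.1 hdisj
  rw [mem_subtree] at hwa hwb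
  have below : ∀ {a b}, G.OnGeodesic r a b → G.subtree r b ⊆ G.subtree r a :=
    fun hab x hx => mem_subtree.2 (hab.trans hT.connected (mem_subtree.1 hx))
  rcases le_total (G.dist r a) (G.dist r b) with h | h
  · exact Or.inr (Or.inl (below (hT.onGeodesic_of_dist_le hwa hwb h)))
  · exact Or.inl (below (hT.onGeodesic_of_dist_le hwb hwa h))

end Geodesics

section Sides

variable [Fintype V] {G : SimpleGraph V}

lemma one_le_side {u v : V} (huv : G.Adj u v) : 1 ≤ side G u v :=
  card_pos.2 ⟨u, by simp [dist_eq_one_iff_adj.2 huv]⟩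

lemma side_add_side_le (G : SimpleGraph V) (u v : V) :
    side G u v + side G v u ≤ Fintype.card V := by
  have : side G v u ≤ #{w | ¬ G.dist w u < G.dist w v} :=
    card_le_card (monotone_filter_right _ fun w h => by omega)
  have := card_filter_add_card_filter_not (s := univ) fun w => G.dist w u < G.dist w v
  rw [card_univ] at this
  unfold side at *
  omega

lemma side_add_side (hT : G.IsTree) {u v : V} (huv : G.Adj u v) :
    side G u v + side G v u = Fintype.card V := by
  have : side G v u = #{w | ¬ G.dist w u < G.dist w v} := by
    unfold side
    congr 1
    refine filter_congr fun w _ => ?_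
    have := hT.dist_eq_dist_add_one_of_adj w huv
    omega
  rw [this, side, card_filter_add_card_filter_not, card_univ]

lemma two_mul_mu_le (G : SimpleGraph V) (u v : V) : 2 * mu G u v ≤ Fintype.card V := by
  have := side_add_side_le G u v
  unfold mu
  omega

lemma one_le_mu {u v : V} (huv : G.Adj u v) : 1 ≤ mu G u v :=
  le_min (one_le_side huv) (one_le_side huv.symm)

lemma side_eq_card_subtree (hT : G.IsTree) {r u v : V} (huv : G.Adj u v)
    (hr : G.dist r v = G.dist r u + 1) : side G v u = #(G.subtree r v) := by
  unfold side subtree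
  congr 1
  exact filter_congr fun w _ => hT.dist_lt_dist_iff_onGeodesic huv hr w

lemma card_edges_le_card_subtree (hT : G.IsTree) (r : V) (k : ℕ) :
    #{e : Sym2 V | e ∈ G.edgeSet ∧ k ≤ muE G e} ≤
      #{v | k ≤ #(G.subtree r v) ∧ #(G.subtree r v) + k ≤ Fintype.card V} := by
  refine card_le_card_of_forall_subsingleton
    (fun e v => ∃ u, G.Adj u v ∧ G.dist r v = G.dist r u + 1 ∧ e = s(u, v)) ?_ ?_
  · intro e he
    obtain ⟨he, hk⟩ := (mem_filter.1 he).2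
    obtain ⟨u, v, huv, hr, rfl⟩ := hT.exists_eq_mk_of_mem_edgeSet r he
    have := side_add_side hT huv
    have := side_eq_card_subtree hT huv hr
    have : k ≤ mu G u v := hk
    unfold mu at this
    exact ⟨v, mem_filter.2 ⟨mem_univ v, by omega⟩, u, huv, hr, rfl⟩
  · rintro v - e₁ ⟨-, u₁, hu₁, hr₁, rfl⟩ e₂ ⟨-, u₂, hu₂, hr₂, rfl⟩
    rw [hT.eq_of_adj_of_dist_eq hu₁ hu₂ hr₁ hr₂]

lemma card_edges_le_mu_le (hT : G.IsTree) {k : ℕ} (hk : 2 ≤ k) :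
    #{e : Sym2 V | e ∈ G.edgeSet ∧ k ≤ muE G e} ≤ Fintype.card V + 1 - 2 * k := by
  obtain ⟨r⟩ := hT.connected.nonempty
  set n := Fintype.card V
  set C : Finset V := {v | k ≤ #(G.subtree r v) ∧ #(G.subtree r v) + k ≤ n}
  calc #{e : Sym2 V | e ∈ G.edgeSet ∧ k ≤ muE G e}
      ≤ #C := card_edges_le_card_subtree hT r k
    _ = #(C.image (G.subtree r)) :=
        (card_image_of_injective _ (hT.connected.subtree_injective r)).symm
    _ ≤ max (#(univ.erase r) + 2 - 2 * k) (min (n - k) #(univ.erase r) + 1 - k) := by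
        refine (hT.isLaminar_image_subtree r C).card_le hk fun A hA => ?_
        obtain ⟨v, hv, rfl⟩ := mem_image.1 hA
        simp only [C, mem_filter, mem_univ, true_and] at hv
        have hvr : v ≠ r := by
          rintro rfl
          rw [subtree_self, card_univ] at hv
          omega
        refine ⟨fun w hw => mem_erase.2 ⟨?_, mem_univ _⟩, hv.1, by omega⟩
        rintro rfl
        exact hvr (hT.connected.eq_of_mem_subtree hw)
    _ = n + 1 - 2 * k := by
        rw [card_erase_of_mem (mem_univ r), card_univ]
        omega

lemma tailSum_eq_card (G : SimpleGraph V) (n k : ℕ) :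
    tailSum G n k = #{e : Sym2 V | e ∈ G.edgeSet ∧ muE G e ∈ Icc k (n / 2)} := by
  rw [card_eq_sum_card_fiberwise fun e he => (mem_filter.1 he).2.2]
  refine sum_congr rfl fun i hi => ?_
  rw [r, filter_filter]
  congr 1
  refine filter_congr fun e _ => ?_
  constructor
  · rintro ⟨he, rfl⟩
    exact ⟨⟨he, hi⟩, rfl⟩
  · rintro ⟨⟨he, -⟩, rfl⟩
    exact ⟨he, rfl⟩

lemma tailSum_le_card_edgeSet (G : SimpleGraph V) (n k : ℕ) :
    tailSum G n k ≤ #{e : Sym2 V | e ∈ G.edgeSet} := by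
  rw [tailSum_eq_card]
  exact card_le_card fun e he => mem_filter.2 ⟨mem_univ e, (mem_filter.1 he).2.1⟩

lemma tailSum_one (hT : G.IsTree) : tailSum G (Fintype.card V) 1 = Fintype.card V - 1 := by
  have hE : ({e : Sym2 V | e ∈ G.edgeSet ∧ muE G e ∈ Icc 1 (Fintype.card V / 2)} :
      Finset (Sym2 V)) = G.edgeFinset := by
    ext e
    induction e using Sym2.ind with
    | _ u v =>
    simp only [mem_filter, mem_univ, true_and, mem_edgeFinset, mem_edgeSet, mem_Icc,
      and_iff_left_iff_imp]
    intro huv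
    have := two_mul_mu_le G u v
    exact ⟨one_le_mu huv, by change mu G u v ≤ _; omega⟩
  rw [tailSum_eq_card, hE]
  have := hT.card_edgeFinset
  omega

lemma tailSum_le (hT : G.IsTree) {k : ℕ} (hk : 1 ≤ k) :
    tailSum G (Fintype.card V) k ≤ Fintype.card V + 1 - 2 * k := by
  obtain rfl | hk := hk.eq_or_lt
  · rw [tailSum_one hT]
    omega
  calc tailSum G (Fintype.card V) k
      ≤ #{e : Sym2 V | e ∈ G.edgeSet ∧ k ≤ muE G e} := by
        rw [tailSum_eq_card]
        refine card_le_card fun e he => mem_filter.2 ⟨mem_univ e, ?_⟩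
        obtain ⟨he, hmu⟩ := (mem_filter.1 he).2
        exact ⟨he, (mem_Icc.1 hmu).1⟩
    _ ≤ Fintype.card V + 1 - 2 * k := card_edges_le_mu_le hT hk

end Sides

lemma starG_adj {n : ℕ} {x y : Fin n} :
    (starG n).Adj x y ↔ x ≠ y ∧ ((x : ℕ) = 0 ∨ (y : ℕ) = 0) := by
  simp [starG]

lemma side_starG_le_one {n : ℕ} {x z : Fin n} (hx : (x : ℕ) ≠ 0) (hz : (z : ℕ) = 0) :
    side (starG n) x z ≤ 1 := by
  have hzx : (starG n).Adj z x := starG_adj.2 ⟨fun h => hx (h ▸ hz), Or.inl hz⟩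
  calc side (starG n) x z ≤ #{x} := card_le_card fun w hw => by
        rw [mem_filter] at hw
        rw [mem_singleton]
        by_contra hwx
        by_cases hwz : w = z
        · subst hwz
          simp at hw
        have hwz' : (starG n).Adj w z := starG_adj.2 ⟨hwz, Or.inr hz⟩
        have hwx' : ¬ (starG n).Adj w x := fun h => by
          rcases (starG_adj.1 h).2 with h | h
          · exact hwz (Fin.ext (h.trans hz.symm))
          · exact hx h
        have := (hwz'.reachable.trans hzx.reachable).one_lt_dist_of_ne_of_not_adj hwx hwx'
        rw [dist_eq_one_iff_adj.2 hwz'] at hw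
        omega
    _ = 1 := card_singleton x

lemma mu_starG_le_one {n : ℕ} {x y : Fin n} (h : (starG n).Adj x y) : mu (starG n) x y ≤ 1 := by
  obtain ⟨hxy, hx | hy⟩ := starG_adj.1 h
  · exact (min_le_right _ _).trans
      (side_starG_le_one (fun hy => hxy (Fin.ext (hx.trans hy.symm))) hx)
  · exact (min_le_left _ _).trans
      (side_starG_le_one (fun hx => hxy (Fin.ext (hx.trans hy.symm))) hy)

lemma tailSum_starG_eq_zero {n k : ℕ} (hk : 2 ≤ k) (m : ℕ) : tailSum (starG n) m k = 0 := by
  rw [tailSum_eq_card, card_eq_zero, filter_eq_empty_iff]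
  intro e _ ⟨he, hmu⟩
  induction e using Sym2.ind with
  | _ x y =>
  have := mu_starG_le_one (x := x) (y := y) he
  have : k ≤ mu (starG n) x y := (mem_Icc.1 hmu).1
  omega

lemma card_edgeSet_starG_le (n : ℕ) :
    #{e : Sym2 (Fin n) | e ∈ (starG n).edgeSet} ≤ n - 1 := by
  rcases n with _ | n
  · simp
  calc #{e : Sym2 (Fin (n + 1)) | e ∈ (starG (n + 1)).edgeSet}
      ≤ #((univ.erase 0).image fun x => s(0, x)) := card_le_card fun e he => by
        rw [mem_filter] at he
        induction e using Sym2.ind with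
        | _ x y =>
        obtain ⟨hxy, hx | hy⟩ := starG_adj.1 he.2
        · obtain rfl : x = 0 := Fin.ext hx
          exact mem_image.2 ⟨y, mem_erase.2 ⟨hxy.symm, mem_univ y⟩, rfl⟩
        · obtain rfl : y = 0 := Fin.ext hy
          exact mem_image.2 ⟨x, mem_erase.2 ⟨hxy, mem_univ x⟩, Sym2.eq_swap⟩
    _ ≤ #(univ.erase (0 : Fin (n + 1))) := card_image_le
    _ = n + 1 - 1 := by simp

lemma pathG_eq_pathGraph (n : ℕ) : pathG n = pathGraph n := by
  ext x y
  simp only [pathG, fromRel_adj, pathGraph_adj, ne_eq, Fin.ext_iff]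
  omega

lemma pathGraph_le_length {n : ℕ} {a b : Fin n} (p : (pathGraph n).Walk a b) :
    (a : ℕ) - b + (b - a) ≤ p.length := by
  induction p with
  | nil => simp
  | cons h p ih =>
    rw [pathGraph_adj] at h
    rw [Walk.length_cons]
    omega

lemma pathGraph_dist_le {n : ℕ} (m : ℕ) {a b : Fin n} (h : (b : ℕ) = a + m) :
    (pathGraph n).dist a b ≤ m := by
  induction m generalizing b with
  | zero => rw [show b = a from Fin.ext (by omega), dist_self]
  | succ m ih =>
    let b' : Fin n := ⟨b - 1, by omega⟩
    have hadj : (pathGraph n).Adj b' b := pathGraph_adj.2 (Or.inl (by simp only [b']; omega))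
    calc (pathGraph n).dist a b ≤ (pathGraph n).dist a b' + (pathGraph n).dist b' b :=
          hadj.reachable.dist_triangle_right a
      _ ≤ m + 1 := by
          rw [dist_eq_one_iff_adj.2 hadj]
          have := ih (b := b') (by simp only [b']; omega)
          omega

lemma pathGraph_dist {n : ℕ} (i j : Fin n) :
    (pathGraph n).dist i j = (i : ℕ) - j + (j - i) := by
  obtain ⟨p, hp⟩ := (pathGraph_preconnected n i j).exists_walk_length_eq_dist
  have := pathGraph_le_length p
  rcases le_total (i : ℕ) j with h | h
  · have := pathGraph_dist_le (j - i) (a := i) (b := j) (by omega)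
    omega
  · have := pathGraph_dist_le (i - j) (a := j) (b := i) (by omega)
    rw [SimpleGraph.dist_comm] at this
    omega

lemma le_mu_pathGraph {n k : ℕ} {a b : Fin n} (hab : (b : ℕ) = a + 1) (ha : k ≤ b)
    (hb : b + k ≤ n) : k ≤ mu (pathGraph n) a b := by
  have hside : k ≤ side (pathGraph n) a b :=
    calc k ≤ #(Iic a) := by rw [Fin.card_Iic]; omega
      _ ≤ side (pathGraph n) a b := card_le_card fun w hw => by
        rw [mem_Iic, Fin.le_def] at hw
        simp only [mem_filter, mem_univ, true_and, pathGraph_dist]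
        omega
  have hside' : k ≤ side (pathGraph n) b a :=
    calc k ≤ #(Ici b) := by rw [Fin.card_Ici]; omega
      _ ≤ side (pathGraph n) b a := card_le_card fun w hw => by
        rw [mem_Ici, Fin.le_def] at hw
        simp only [mem_filter, mem_univ, true_and, pathGraph_dist]
        omega
  exact le_min hside hside'

lemma le_tailSum_pathGraph {n k : ℕ} (hk : 1 ≤ k) (hkn : 2 * k ≤ n) :
    n + 1 - 2 * k ≤ tailSum (pathGraph n) n k := by
  rw [tailSum_eq_card]
  calc n + 1 - 2 * k ≤ #(Ico (k - 1) (n - k)) := by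
        rw [Nat.card_Ico]
        omega
    _ ≤ _ := card_le_card_of_forall_subsingleton
        (fun i e => ∃ a b : Fin n, (a : ℕ) = i ∧ (b : ℕ) = i + 1 ∧ e = s(a, b)) ?_ ?_
  · intro i hi
    rw [mem_Ico] at hi
    let a : Fin n := ⟨i, by omega⟩
    let b : Fin n := ⟨i + 1, by omega⟩
    have hmu := le_mu_pathGraph (k := k) (a := a) (b := b) rfl (by simp only [b]; omega)
      (by simp only [b]; omega)
    have := two_mul_mu_le (pathGraph n) a b
    rw [Fintype.card_fin] at this
    refine ⟨s(a, b), mem_filter.2 ⟨mem_univ _, pathGraph_adj.2 (Or.inl rfl), ?_⟩,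
      a, b, rfl, rfl, rfl⟩
    exact mem_Icc.2 ⟨hmu, by change mu _ a b ≤ n / 2; omega⟩
  · rintro e - i ⟨-, a, b, rfl, hb, rfl⟩ j ⟨-, a', b', rfl, hb', he⟩
    rcases Sym2.eq_iff.1 he with ⟨h, -⟩ | ⟨h, h'⟩
    · rw [h]
    · rw [Fin.ext_iff] at h h'
      omega

/-- For every tree `T` on `n` vertices, `S_n ⪯ T ⪯ P_n`. -/
theorem stmt15 {V : Type*} [Fintype V] (G : SimpleGraph V) (hT : G.IsTree) :
    Preceq (Fintype.card V) (starG (Fintype.card V)) G ∧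
    Preceq (Fintype.card V) G (pathG (Fintype.card V)) := by
  refine ⟨fun k hk _ => ?_, fun k hk hkn => ?_⟩
  · obtain rfl | hk := hk.eq_or_lt
    · rw [tailSum_one hT]
      exact (tailSum_le_card_edgeSet _ _ _).trans (card_edgeSet_starG_le _)
    · rw [tailSum_starG_eq_zero hk]
      exact Nat.zero_le _
  · rw [pathG_eq_pathGraph]
    exact (tailSum_le hT hk).trans (le_tailSum_pathGraph hk (by omega))

end TreeOrder
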